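/- arXiv:1604.05414 — 2 statements merged into one kernel-verified Lean document; each statement's English description precedes it below -/
import Mathlib

section
/- If G is an edgewise strongly shellable graph and H is a quotient graph of G via a quotient map f, then H is also edgewise strongly shellable. -/
open scoped Classical

def StronglyShellable {α : Type*} [DecidableEq α] (F : Finset (Finset α)) : Prop :=
  ∃ l : List (Finset α), l.Nodup ∧ l.toFinset = F ∧
    ∀ i j : Fin l.length, (i : ℕ) < (j : ℕ) →
      ∃ k : Fin l.length, (k : ℕ) < (j : ℕ) ∧
        (l.get j \ l.get k).card = 1 ∧
        l.get i ∩ l.get j ⊆ l.get k ∧ l.get k ⊆ l.get i ∪ l.get j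

def edgeSets {V : Type*} [Fintype V] [DecidableEq V] (G : SimpleGraph V) [DecidableRel G.Adj] :
    Finset (Finset V) :=
  G.edgeFinset.image (Sym2.lift ⟨fun u v => ({u, v} : Finset V), fun u v => Finset.pair_comm u v⟩)

/-! A strong shelling is the same as a ranking of the family, injective on it, in which for every
`a` ranked below `b` some `c` ranked below `b` has `|b \ c| = 1` and `a ∩ b ⊆ c ⊆ a ∪ b`. For the
edges of a graph this only constrains disjoint edges `a`, `b`: some edge of smaller rank than `b`
must join `a` to `b`. Rank each edge of `H` by the least rank of an edge of `G` mapping onto it.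
Minimal preimages of disjoint edges of `H` are disjoint edges of `G`; the edge of `G` joining them
maps onto an edge of `H` (its endpoints land in disjoint sets) joining the two edges, and the rank
of that edge of `H` is at most the rank of its preimage. -/

section Rank

variable {α : Type*} [DecidableEq α]

def IsStrongShellingRank (F : Finset (Finset α)) (r : Finset α → ℕ) : Prop :=
  Set.InjOn r F ∧ ∀ a ∈ F, ∀ b ∈ F, r a < r b →
    ∃ c ∈ F, r c < r b ∧ (b \ c).card = 1 ∧ a ∩ b ⊆ c ∧ c ⊆ a ∪ b

theorem StronglyShellable.exists_isStrongShellingRank {F : Finset (Finset α)}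
    (hF : StronglyShellable F) : ∃ r, IsStrongShellingRank F r := by
  obtain ⟨l, hnd, rfl, hsh⟩ := hF
  refine ⟨l.idxOf, fun a ha b _ hab => (List.idxOf_inj (List.mem_toFinset.1 ha)).1 hab, ?_⟩
  intro a ha b hb hab
  rw [List.mem_toFinset] at ha hb
  obtain ⟨k, hkb, hcard, hinter, hunion⟩ :=
    hsh ⟨_, List.idxOf_lt_length_of_mem ha⟩ ⟨_, List.idxOf_lt_length_of_mem hb⟩ hab
  simp only [List.get_eq_getElem, List.getElem_idxOf] at hkb hcard hinter hunion
  refine ⟨l[(k : ℕ)], List.mem_toFinset.2 (List.getElem_mem _), ?_, hcard, hinter, hunion⟩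
  show l.idxOf l[(k : ℕ)] < l.idxOf b
  rwa [hnd.idxOf_getElem]

theorem StronglyShellable.of_isStrongShellingRank {F : Finset (Finset α)} {r : Finset α → ℕ}
    (hr : IsStrongShellingRank F r) : StronglyShellable F := by
  obtain ⟨hinj, hshell⟩ := hr
  let l := F.toList.insertionSort (fun a b => r a ≤ r b)
  have hperm : l.Perm F.toList := List.perm_insertionSort _ _
  have hnd : l.Nodup := hperm.nodup_iff.2 F.nodup_toList
  have hmem : ∀ {a}, a ∈ l ↔ a ∈ F := by simp [hperm.mem_iff]
  have hmono : ∀ {i j : Fin l.length}, i ≤ j → r (l.get i) ≤ r (l.get j) := by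
    intro i j hij
    rcases hij.eq_or_lt with rfl | hlt
    · exact le_rfl
    · exact (List.pairwise_insertionSort _ _).rel_get_of_lt hlt
  refine ⟨l, hnd, by simp [List.toFinset_eq_of_perm _ _ hperm], fun i j hij => ?_⟩
  have hlt : r (l.get i) < r (l.get j) := by
    refine (hmono hij.le).lt_of_ne fun h => hij.ne ?_
    exact Fin.val_congr (hnd.get_inj_iff.1 (hinj (hmem.1 (l.get_mem i)) (hmem.1 (l.get_mem j)) h))
  obtain ⟨c, hc, hcj, hrest⟩ := hshell _ (hmem.1 (l.get_mem i)) _ (hmem.1 (l.get_mem j)) hlt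
  obtain ⟨k, rfl⟩ := List.get_of_mem (hmem.2 hc)
  exact ⟨k, lt_of_not_ge fun hjk => (hmono hjk).not_gt hcj, hrest⟩

end Rank

namespace Finset

variable {α : Type*} [DecidableEq α]

theorem card_sdiff_eq_one_of_card_eq_two {a b : Finset α} (ha : a.card = 2) (hb : b.card = 2)
    (hab : a ≠ b) (hmeet : ¬Disjoint a b) : (b \ a).card = 1 := by
  have hinter : (b ∩ a).Nonempty := by
    rw [inter_comm]; exact not_disjoint_iff_nonempty_inter.1 hmeet
  have hnsub : ¬b ⊆ a := fun h => hab (eq_of_subset_of_card_le h (by omega)).symm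
  have := card_sdiff_add_card_inter b a
  have := hinter.card_pos
  have := card_pos.2 (sdiff_nonempty.2 hnsub)
  omega

theorem card_sdiff_pair_eq_one {b : Finset α} {x y : α} (hx : x ∉ b) (hy : y ∈ b)
    (hb : b.card = 2) : (b \ {x, y}).card = 1 := by
  rw [sdiff_insert_of_notMem hx, sdiff_singleton_eq_erase, card_erase_of_mem hy, hb]

theorem mem_and_mem_or_of_card_sdiff_pair_eq_one {a b : Finset α} {p q : α} (hpq : p ≠ q)
    (hb : b.card = 2) (hsd : (b \ {p, q}).card = 1) (hsub : {p, q} ⊆ a ∪ b) :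
    p ∈ a ∧ q ∈ b ∨ q ∈ a ∧ p ∈ b := by
  rw [insert_subset_iff, singleton_subset_iff, mem_union, mem_union] at hsub
  by_cases hp : p ∈ b <;> by_cases hq : q ∈ b
  · have : b = {p, q} := (eq_of_subset_of_card_le (by simp [insert_subset_iff, hp, hq])
      (by rw [hb, card_pair hpq])).symm
    simp [this] at hsd
  · exact .inr ⟨hsub.2.resolve_right hq, hp⟩
  · exact .inl ⟨hsub.1.resolve_right hp, hq⟩
  · rw [sdiff_insert_of_notMem hp, sdiff_singleton_eq_erase, erase_eq_of_notMem hq, hb] at hsd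
    omega

end Finset

section Graph

variable {V : Type*} [Fintype V] [DecidableEq V] (G : SimpleGraph V) [DecidableRel G.Adj]

theorem mem_edgeSets_iff {S : Finset V} : S ∈ edgeSets G ↔ ∃ u v, G.Adj u v ∧ S = {u, v} := by
  simp only [edgeSets, Finset.mem_image, Sym2.exists, SimpleGraph.mem_edgeFinset,
    SimpleGraph.mem_edgeSet, Sym2.lift_mk]
  exact exists₂_congr fun u v => and_congr_right fun _ => eq_comm

theorem pair_mem_edgeSets {u v : V} (h : G.Adj u v) : ({u, v} : Finset V) ∈ edgeSets G :=
  (mem_edgeSets_iff G).2 ⟨u, v, h, rfl⟩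

theorem card_eq_two_of_mem_edgeSets {S : Finset V} (hS : S ∈ edgeSets G) : S.card = 2 := by
  obtain ⟨u, v, huv, rfl⟩ := (mem_edgeSets_iff G).1 hS
  exact Finset.card_pair huv.ne

theorem isStrongShellingRank_edgeSets_iff (r : Finset V → ℕ) :
    IsStrongShellingRank (edgeSets G) r ↔ Set.InjOn r (edgeSets G) ∧
      ∀ a ∈ edgeSets G, ∀ b ∈ edgeSets G, Disjoint a b → r a < r b →
        ∃ x ∈ a, ∃ y ∈ b, G.Adj x y ∧ r {x, y} < r b := by
  refine and_congr_right fun _ => ⟨fun hshell a ha b hb hab hr => ?_, fun hlink a ha b hb hr => ?_⟩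
  · obtain ⟨c, hc, hcb, hcard, -, hsub⟩ := hshell a ha b hb hr
    obtain ⟨p, q, hpq, rfl⟩ := (mem_edgeSets_iff G).1 hc
    rcases Finset.mem_and_mem_or_of_card_sdiff_pair_eq_one hpq.ne
      (card_eq_two_of_mem_edgeSets G hb) hcard hsub with ⟨hp, hq⟩ | ⟨hq, hp⟩
    · exact ⟨p, hp, q, hq, hpq, hcb⟩
    · exact ⟨q, hq, p, hp, hpq.symm, by rwa [Finset.pair_comm]⟩
  · by_cases hab : Disjoint a b
    · obtain ⟨x, hx, y, hy, hxy, hlt⟩ := hlink a ha b hb hab hr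
      refine ⟨{x, y}, pair_mem_edgeSets G hxy, hlt,
        Finset.card_sdiff_pair_eq_one (Finset.disjoint_left.1 hab hx) hy
          (card_eq_two_of_mem_edgeSets G hb), ?_, ?_⟩
      · simp [Finset.disjoint_iff_inter_eq_empty.1 hab]
      · simp [Finset.insert_subset_iff, hx, hy]
    · refine ⟨a, ha, hr, ?_, Finset.inter_subset_left, Finset.subset_union_left⟩
      exact Finset.card_sdiff_eq_one_of_card_eq_two (card_eq_two_of_mem_edgeSets G ha)
        (card_eq_two_of_mem_edgeSets G hb) (fun h => hr.ne (congrArg r h)) hab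

end Graph

section MinPreimageRank

variable {α β : Type*} [DecidableEq β] {F : Finset (Finset α)} {f : α → β} {r : Finset α → ℕ}

noncomputable def minPreimageRank (F : Finset (Finset α)) (f : α → β) (r : Finset α → ℕ)
    (b : Finset β) : ℕ :=
  sInf (r '' {a | a ∈ F ∧ a.image f = b})

theorem minPreimageRank_le {a : Finset α} {b : Finset β} (ha : a ∈ F) (hab : a.image f = b) :
    minPreimageRank F f r b ≤ r a :=
  Nat.sInf_le ⟨a, ⟨ha, hab⟩, rfl⟩

theorem exists_minPreimageRank_eq {b : Finset β} (h : ∃ a ∈ F, a.image f = b) :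
    ∃ a ∈ F, a.image f = b ∧ r a = minPreimageRank F f r b := by
  obtain ⟨a, ha, hab⟩ := h
  obtain ⟨a', ⟨ha', ha'b⟩, hr⟩ :=
    Nat.sInf_mem (s := r '' {a | a ∈ F ∧ a.image f = b}) ⟨r a, a, ⟨ha, hab⟩, rfl⟩
  exact ⟨a', ha', ha'b, hr⟩

theorem injOn_minPreimageRank (hr : Set.InjOn r F) :
    Set.InjOn (minPreimageRank F f r) {b | ∃ a ∈ F, a.image f = b} := by
  intro b hb b' hb' h
  obtain ⟨a, ha, rfl, hra⟩ := exists_minPreimageRank_eq (r := r) hb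
  obtain ⟨a', ha', rfl, hra'⟩ := exists_minPreimageRank_eq (r := r) hb'
  rw [hr ha ha' (hra.trans (h.trans hra'.symm))]

end MinPreimageRank

theorem stmt8_general {VG VH : Type*} [Fintype VG] [DecidableEq VG] [Fintype VH] [DecidableEq VH]
    (G : SimpleGraph VG) (H : SimpleGraph VH) [DecidableRel G.Adj] [DecidableRel H.Adj]
    (f : VG → VH)
    (ha : ∀ u₁ u₂ : VG, G.Adj u₁ u₂ → f u₁ ≠ f u₂ → H.Adj (f u₁) (f u₂))
    (hb : ∀ v₁ v₂ : VH, H.Adj v₁ v₂ → ∃ u₁ u₂ : VG, G.Adj u₁ u₂ ∧ f u₁ = v₁ ∧ f u₂ = v₂)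
    (hESS : StronglyShellable (edgeSets G)) :
    StronglyShellable (edgeSets H) := by
  obtain ⟨r, hr⟩ := hESS.exists_isStrongShellingRank
  obtain ⟨hinj, hlink⟩ := (isStrongShellingRank_edgeSets_iff G r).1 hr
  have hlift : ∀ e ∈ edgeSets H, ∃ e' ∈ edgeSets G, e'.image f = e := by
    intro e he
    obtain ⟨v₁, v₂, hv, rfl⟩ := (mem_edgeSets_iff H).1 he
    obtain ⟨u₁, u₂, hu, rfl, rfl⟩ := hb v₁ v₂ hv
    exact ⟨{u₁, u₂}, pair_mem_edgeSets G hu, by simp⟩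
  refine .of_isStrongShellingRank ((isStrongShellingRank_edgeSets_iff H _).2
    ⟨(injOn_minPreimageRank hinj).mono hlift, fun a haH b hbH hab hlt => ?_⟩)
  obtain ⟨a', ha', rfl, hra⟩ := exists_minPreimageRank_eq (r := r) (hlift a haH)
  obtain ⟨b', hb', rfl, hrb⟩ := exists_minPreimageRank_eq (r := r) (hlift b hbH)
  obtain ⟨x, hx, y, hy, hxy, hxyb⟩ :=
    hlink a' ha' b' hb' (Disjoint.of_image_finset hab) (by omega)
  have hfx := Finset.mem_image_of_mem f hx
  have hfy := Finset.mem_image_of_mem f hy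
  refine ⟨f x, hfx, f y, hfy, ha x y hxy fun h => Finset.disjoint_left.1 hab hfx (h ▸ hfy), ?_⟩
  calc minPreimageRank (edgeSets G) f r {f x, f y} ≤ r {x, y} :=
        minPreimageRank_le (pair_mem_edgeSets G hxy) (by simp)
    _ < r b' := hxyb
    _ = _ := hrb

/-- If H is a quotient graph of an ESS graph G, then H is also ESS. -/
theorem stmt8 {VG VH : Type*} [Fintype VG] [DecidableEq VG] [Fintype VH] [DecidableEq VH]
    (G : SimpleGraph VG) (H : SimpleGraph VH) [DecidableRel G.Adj] [DecidableRel H.Adj]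
    (f : VG → VH) (hsurj : Function.Surjective f)
    (ha : ∀ u₁ u₂ : VG, G.Adj u₁ u₂ → f u₁ ≠ f u₂ → H.Adj (f u₁) (f u₂))
    (hb : ∀ v₁ v₂ : VH, H.Adj v₁ v₂ → ∃ u₁ u₂ : VG, G.Adj u₁ u₂ ∧ f u₁ = v₁ ∧ f u₂ = v₂)
    (hESS : StronglyShellable (edgeSets G)) :
    StronglyShellable (edgeSets H) :=
  stmt8_general G H f ha hb hESS
end

section
/- Let T be a tree and G_T its generic graph. If e and f are any two edges of G_T, then some endpoint of e is adjacent or equal in G_T to some endpoint of f; precisely, if {x_{i_1,k_1}, x_{j_1,l_1}} and {x_{i_2,k_2}, x_{j_2,l_2}} are edges of G_T, then at least one of {x_{i_1,k_1}, x_{i_2,k_2}}, {x_{i_1,k_1}, x_{j_2,l_2}}, {x_{j_1,l_1}, x_{i_2,k_2}}, {x_{j_1,l_1}, x_{j_2,l_2}} is an edge of G_T. -/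
/-!
For a vertex `x` of a tree and a neighbour `n`, let `T.branch x n` be the set of vertices
reachable from `n` without passing through `x`. Then `x_{i,k} ∼ x_{j,l}` exactly when
`j ∈ T.branch i k` and `i ∈ T.branch j l`, and for such a pair the two branches cover the tree.
Now let `x_{i,k} ∼ x_{j,l}` and `x_{p,q} ∼ x_{r,s}` be edges. The vertex `p` lies in
`T.branch i k` or in `T.branch j l`, say in the first. If `r` lies there too, then `i` lies in
`T.branch p q` or in `T.branch r s`, so `x_{i,k}` is adjacent to `x_{p,q}` or to `x_{r,s}`.
Otherwise `i` separates `p` from `r`, which forces `i` into `T.branch p q`: `x_{i,k} ∼ x_{p,q}`.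
-/

open scoped Classical

abbrev GenericVertex {V : Type*} (T : SimpleGraph V) : Type _ := {p : V × V // T.Adj p.1 p.2}

/-- The generic graph of a tree T: vertices are ordered pairs (i,k) with {i,k} ∈ E(T)
(representing x_{i,k}); x_{i,k} is adjacent to x_{j,l} iff on the unique path in T from i
to j, the second vertex is k and the second-to-last vertex is l. -/
def genericGraph {V : Type*} [DecidableEq V] (T : SimpleGraph V) : SimpleGraph (GenericVertex T) :=
  SimpleGraph.fromRel fun a b =>
    ∃ w : T.Walk a.val.1 b.val.1, w.IsPath ∧ 0 < w.length ∧
      w.support[1]? = some a.val.2 ∧ w.support.reverse[1]? = some b.val.2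

namespace SimpleGraph

variable {V : Type*} {T : SimpleGraph V}

def branch (T : SimpleGraph V) (x n : V) : Set V :=
  {y | ∃ p : T.Walk n y, x ∉ p.support}

lemma self_notMem_branch (x n : V) : x ∉ T.branch x n :=
  fun ⟨p, hx⟩ => hx p.end_mem_support

lemma mem_branch_of_walk {x n y z : V} (hy : y ∈ T.branch x n) (r : T.Walk y z)
    (hx : x ∉ r.support) : z ∈ T.branch x n := by
  obtain ⟨p, hp⟩ := hy
  exact ⟨p.append r, by simp [Walk.mem_support_append_iff, hp, hx]⟩

lemma mem_branch_of_separates {u w y m z : V} (hm : T.Adj y m) (hz : z ∈ T.branch y m)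
    (hy : y ∈ T.branch u w) (hz' : z ∉ T.branch u w) : u ∈ T.branch y m := by
  obtain ⟨p, hyp⟩ := hz
  have hu : u ∈ (Walk.cons hm p).support := by
    by_contra hu
    exact hz' (mem_branch_of_walk hy _ hu)
  have hu' : u ∈ p.support := by
    rw [Walk.support_cons, List.mem_cons] at hu
    refine hu.resolve_left ?_
    rintro rfl
    exact self_notMem_branch u w hy
  exact ⟨p.takeUntil u hu', fun h => hyp (p.support_takeUntil_subset_support hu' h)⟩

lemma Preconnected.mem_branch_or_mem_branch (hT : T.Preconnected) {i k j l : V}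
    (hj : j ∈ T.branch i k) (hi : i ∈ T.branch j l) (v : V) :
    v ∈ T.branch i k ∨ v ∈ T.branch j l := by
  obtain ⟨Q, hQ⟩ := hT.exists_isPath v i
  by_cases hjQ : j ∈ Q.support
  · have hij : i ≠ j := by
      rintro rfl
      exact self_notMem_branch i k hj
    left
    refine mem_branch_of_walk hj (Q.takeUntil j hjQ).reverse ?_
    simpa using Walk.endpoint_notMem_support_takeUntil hQ hjQ hij
  · right
    exact mem_branch_of_walk hi Q.reverse (by simpa using hjQ)

lemma mem_branch_of_isPath {x y n : V} {w : T.Walk x y} (hw : w.IsPath)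
    (h : w.support[1]? = some n) : y ∈ T.branch x n := by
  cases w with
  | nil => simp at h
  | cons _ p =>
    obtain rfl : _ = n := by simpa using h
    exact ⟨p, (Walk.cons_isPath_iff _ _).mp hw |>.2⟩

lemma IsAcyclic.exists_isPath_support_getElem_one_iff (hT : T.IsAcyclic) {x y n m : V}
    (hn : T.Adj x n) (hm : T.Adj y m) :
    (∃ w : T.Walk x y, w.IsPath ∧ 0 < w.length ∧
      w.support[1]? = some n ∧ w.support.reverse[1]? = some m) ↔
      y ∈ T.branch x n ∧ x ∈ T.branch y m := by
  constructor
  · rintro ⟨w, hw, -, hn', hm'⟩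
    refine ⟨mem_branch_of_isPath hw hn', mem_branch_of_isPath hw.reverse ?_⟩
    rwa [Walk.support_reverse]
  · rintro ⟨⟨p, hxp⟩, ⟨q, hyq⟩⟩
    have hP : (Walk.cons hn p.bypass).IsPath :=
      p.bypass_isPath.cons fun h => hxp (p.support_bypass_subset_support h)
    have hQ : (Walk.cons hm q.bypass).IsPath :=
      q.bypass_isPath.cons fun h => hyq (q.support_bypass_subset_support h)
    have hPQ : Walk.cons hn p.bypass = (Walk.cons hm q.bypass).reverse :=
      Subtype.mk.inj <| hT.subsingleton_path x y |>.elim ⟨_, hP⟩ ⟨_, hQ.reverse⟩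
    refine ⟨_, hP, by simp, by simp, ?_⟩
    rw [hPQ, Walk.support_reverse, List.reverse_reverse]
    simp

end SimpleGraph

open SimpleGraph

section GenericGraph

variable {V : Type*} [DecidableEq V] {T : SimpleGraph V}

lemma genericGraph_adj_iff (hT : T.IsAcyclic) (a b : GenericVertex T) :
    (genericGraph T).Adj a b ↔ b.1.1 ∈ T.branch a.1.1 a.1.2 ∧ a.1.1 ∈ T.branch b.1.1 b.1.2 := by
  rw [genericGraph, fromRel_adj, hT.exists_isPath_support_getElem_one_iff a.2 b.2,
    hT.exists_isPath_support_getElem_one_iff b.2 a.2, and_comm (a := a.1.1 ∈ _), or_self]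
  refine ⟨And.right, fun h => ⟨?_, h⟩⟩
  rintro rfl
  exact self_notMem_branch _ _ h.1

lemma genericGraph_adj_or_adj_of_mem_branch (hT : T.IsTree)
    (x : GenericVertex T) {c d : GenericVertex T} (hcd : (genericGraph T).Adj c d)
    (hc : c.1.1 ∈ T.branch x.1.1 x.1.2) :
    (genericGraph T).Adj x c ∨ (genericGraph T).Adj x d := by
  simp only [genericGraph_adj_iff hT.isAcyclic] at hcd ⊢
  by_cases hd : d.1.1 ∈ T.branch x.1.1 x.1.2
  · rcases hT.connected.preconnected.mem_branch_or_mem_branch hcd.1 hcd.2 x.1.1 with hx | hx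
    · exact Or.inl ⟨hc, hx⟩
    · exact Or.inr ⟨hd, hx⟩
  · -- `x.1.1` separates `c.1.1` from `d.1.1`
    exact Or.inl ⟨hc, mem_branch_of_separates c.2 hcd.1 hc hd⟩

end GenericGraph

theorem stmt11_general {V : Type*} [DecidableEq V] (T : SimpleGraph V)
    (hT : T.IsTree) (a b c d : GenericVertex T)
    (h1 : (genericGraph T).Adj a b) (h2 : (genericGraph T).Adj c d) :
    (genericGraph T).Adj a c ∨ (genericGraph T).Adj a d ∨
    (genericGraph T).Adj b c ∨ (genericGraph T).Adj b d := by
  obtain ⟨hb, ha⟩ := (genericGraph_adj_iff hT.isAcyclic a b).mp h1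
  rcases hT.connected.preconnected.mem_branch_or_mem_branch hb ha c.1.1 with hc | hc
  · exact (genericGraph_adj_or_adj_of_mem_branch hT a h2 hc).elim Or.inl (Or.inr ∘ Or.inl)
  · exact Or.inr (Or.inr (genericGraph_adj_or_adj_of_mem_branch hT b h2 hc))

/-- If {a,b} and {c,d} are two edges of the generic graph of a tree, then at least one of
{a,c}, {a,d}, {b,c}, {b,d} is also an edge. -/
theorem stmt11 {V : Type*} [Fintype V] [DecidableEq V] (T : SimpleGraph V) [DecidableRel T.Adj]
    (hT : T.IsTree) (a b c d : GenericVertex T)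
    (h1 : (genericGraph T).Adj a b) (h2 : (genericGraph T).Adj c d) :
    (genericGraph T).Adj a c ∨ (genericGraph T).Adj a d ∨
    (genericGraph T).Adj b c ∨ (genericGraph T).Adj b d :=
  stmt11_general T hT a b c d h1 h2
end
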